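/- Let G be a connected graph with at least 3 vertices such that G = KB(H) for some graph H. Then every vertex of G has degree at least 2. -/

import Mathlib

open SimpleGraph

variable {V : Type*}

/-- `S` is the vertex set of an induced complete bipartite subgraph of `G`. -/
def IsCompleteBipartiteSet (G : SimpleGraph V) (S : Set V) : Prop :=
  ∃ X Y : Set V, X.Nonempty ∧ Y.Nonempty ∧ S = X ∪ Y ∧ Disjoint X Y ∧
    ∀ a ∈ S, ∀ b ∈ S, (G.Adj a b ↔ ((a ∈ X ∧ b ∈ Y) ∨ (a ∈ Y ∧ b ∈ X)))

/-- A biclique of `G`: a maximal induced complete bipartite subgraph,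
identified with its vertex set. -/
def IsBiclique (G : SimpleGraph V) (S : Set V) : Prop :=
  IsCompleteBipartiteSet G S ∧
    ∀ T : Set V, IsCompleteBipartiteSet G T → S ⊆ T → T = S

/-- The biclique graph `KB(G)`: the intersection graph of the bicliques of `G`. -/
def KB (G : SimpleGraph V) : SimpleGraph {S : Set V // IsBiclique G S} where
  Adj A B := A ≠ B ∧ (A.1 ∩ B.1).Nonempty
  symm := by
    refine ⟨?_⟩
    intro A B h
    exact ⟨Ne.symm h.1, by rw [Set.inter_comm]; exact h.2⟩
  loopless := by
    refine ⟨?_⟩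
    intro A h
    exact h.1 rfl

/-- The distance between two bicliques (vertex sets) of `G`:
`min { d_G(b,b') : b ∈ B, b' ∈ B' }`. -/
noncomputable def bicliqueDist (G : SimpleGraph V) (B B' : Set V) : ℕ :=
  sInf {k : ℕ | ∃ b ∈ B, ∃ b' ∈ B', G.dist b b' = k}

lemma cbs_extend [Finite V] (H : SimpleGraph V) {S : Set V}
    (hS : IsCompleteBipartiteSet H S) : ∃ B, IsBiclique H B ∧ S ⊆ B := by
  obtain ⟨B, hB, hmax⟩ := Set.Finite.exists_maximalFor id
    {T : Set V | IsCompleteBipartiteSet H T ∧ S ⊆ T} (Set.toFinite _)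
    ⟨S, hS, subset_rfl⟩
  refine ⟨B, ⟨hB.1, ?_⟩, hB.2⟩
  intro T hT hBT
  exact Set.Subset.antisymm (hmax ⟨hT, hB.2.trans hBT⟩ hBT) hBT

lemma biclique_nonempty (H : SimpleGraph V) {B B' : Set V}
    (hB : IsBiclique H B) (hB' : IsBiclique H B') (hne : B ≠ B') : B.Nonempty := by
  rcases B.eq_empty_or_nonempty with rfl | h
  · exact absurd (hB.2 B' hB'.1 (Set.empty_subset _)).symm hne
  · exact h

lemma mk_cbs (H : SimpleGraph V) (X Y : Set V) (hX : X.Nonempty) (hY : Y.Nonempty)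
    (hd : Disjoint X Y) (h1 : ∀ a ∈ X, ∀ b ∈ Y, H.Adj a b) (h2 : ∀ a ∈ X, ∀ b ∈ X, ¬ H.Adj a b)
    (h3 : ∀ a ∈ Y, ∀ b ∈ Y, ¬ H.Adj a b) : IsCompleteBipartiteSet H (X ∪ Y) := by
  refine ⟨X, Y, hX, hY, rfl, hd, ?_⟩
  intro a ha b hb
  have hd' := Set.disjoint_left.mp hd
  rcases (Set.mem_union _ _ _).mp ha with ha' | ha' <;>
    rcases (Set.mem_union _ _ _).mp hb with hb' | hb'
  · exact iff_of_false (h2 a ha' b hb') (by have := hd' ha'; have := hd' hb'; tauto)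
  · exact iff_of_true (h1 a ha' b hb') (Or.inl ⟨ha', hb'⟩)
  · exact iff_of_true (h1 b hb' a ha').symm (Or.inr ⟨ha', hb'⟩)
  · exact iff_of_false (h3 a ha' b hb')
      (by have := fun (h : a ∈ X) => hd' h ha'; have := fun (h : b ∈ X) => hd' h hb'; tauto)

lemma cbs_nbr (H : SimpleGraph V) {S : Set V} (hS : IsCompleteBipartiteSet H S) {p : V}
    (hp : p ∈ S) : ∃ r ∈ S, H.Adj p r := by
  obtain ⟨X, Y, ⟨x, hx⟩, ⟨y, hy⟩, rfl, hd, hadj⟩ := hS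
  rcases (Set.mem_union _ _ _).mp hp with hp' | hp'
  · exact ⟨y, Set.mem_union_right X hy,
      (hadj p hp y (Set.mem_union_right X hy)).mpr (Or.inl ⟨hp', hy⟩)⟩
  · exact ⟨x, Set.mem_union_left Y hx,
      (hadj p hp x (Set.mem_union_left Y hx)).mpr (Or.inr ⟨hp', hx⟩)⟩

lemma cbs_tri (H : SimpleGraph V) {S : Set V} (hS : IsCompleteBipartiteSet H S) {u v z : V}
    (hu : u ∈ S) (hv : v ∈ S) (hz : z ∈ S) (h1 : ¬ H.Adj z u) (h2 : ¬ H.Adj z v) :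
    ¬ H.Adj u v := by
  obtain ⟨X, Y, -, -, rfl, hd, hadj⟩ := hS
  rw [hadj z hz u hu] at h1
  rw [hadj z hz v hv] at h2
  rw [hadj u hu v hv]
  have hd' := Set.disjoint_left.mp hd
  have eu : u ∈ X → u ∉ Y := fun h => hd' h
  have ev : v ∈ X → v ∉ Y := fun h => hd' h
  have ez : z ∈ X → z ∉ Y := fun h => hd' h
  have mu := (Set.mem_union _ _ _).mp hu
  have mv := (Set.mem_union _ _ _).mp hv
  have mz := (Set.mem_union _ _ _).mp hz
  tauto

lemma key_aux [Finite V] (H : SimpleGraph V) {B C D X Y : Set V}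
    (hC : IsCompleteBipartiteSet H C) (hD : IsCompleteBipartiteSet H D)
    (hBXY : B = X ∪ Y) (hXY : Disjoint X Y) (hYne : Y.Nonempty)
    (hadjB : ∀ a ∈ B, ∀ b ∈ B, (H.Adj a b ↔ ((a ∈ X ∧ b ∈ Y) ∨ (a ∈ Y ∧ b ∈ X))))
    (hall : ∀ S, IsCompleteBipartiteSet H S → (B ∩ S).Nonempty → S ⊆ B ∨ S ⊆ C)
    {w : V} (hwX : w ∈ X) (hwC : w ∉ C)
    (hBC : (B ∩ C).Nonempty) (hCD : (C ∩ D).Nonempty) (hBD : B ∩ D = ∅) : False := by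
  have hXB : ∀ x ∈ X, x ∈ B := fun x hx => hBXY ▸ Set.mem_union_left Y hx
  have hYB : ∀ y ∈ Y, y ∈ B := fun y hy => hBXY ▸ Set.mem_union_right X hy
  have hdis := Set.disjoint_left.mp hXY
  have hXYadj : ∀ x ∈ X, ∀ y ∈ Y, H.Adj x y := fun x hx y hy =>
    (hadjB x (hXB x hx) y (hYB y hy)).mpr (Or.inl ⟨hx, hy⟩)
  have hYY : ∀ y ∈ Y, ∀ y' ∈ Y, ¬ H.Adj y y' := fun y hy y' hy' h => by
    rcases (hadjB y (hYB y hy) y' (hYB y' hy')).mp h with h | h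
    · exact hdis h.1 hy
    · exact hdis h.2 hy'
  have hout : ∀ S, IsCompleteBipartiteSet H S → ∀ b ∈ S, b ∈ B → ∀ s ∈ S, s ∉ B → S ⊆ C := by
    intro S hS b hbS hbB s hsS hsB
    rcases hall S hS ⟨b, hbB, hbS⟩ with h | h
    · exact absurd (h hsS) hsB
    · exact h
  have hw : ∀ S, IsCompleteBipartiteSet H S → w ∈ S → S ⊆ B := by
    intro S hS hwS
    rcases hall S hS ⟨w, hXB w hwX, hwS⟩ with h | h
    · exact h
    · exact absurd (h hwS) hwC
  have hNw : ∀ t, H.Adj w t → t ∈ B := by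
    intro t ht
    have hS := mk_cbs H {w} {t} (Set.singleton_nonempty _) (Set.singleton_nonempty _)
      (Set.disjoint_singleton.mpr ht.ne) (by simp [ht]) (by simp) (by simp)
    exact hw _ hS (by simp) (by simp)
  have hNy : ∀ y ∈ Y, ∀ t, H.Adj y t → t ∈ B := by
    intro y hy t ht
    by_contra htB
    have hwt : ¬ H.Adj w t := fun h => htB (hNw t h)
    have htw : ¬ H.Adj t w := fun h => hwt h.symm
    have hyw : H.Adj y w := (hXYadj w hwX y hy).symm
    have hdj : Disjoint ({y} : Set V) {w, t} := by
      rw [Set.disjoint_singleton_left]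
      rintro (h | h)
      · exact hdis hwX (h ▸ hy)
      · exact htB (h ▸ hYB y hy)
    have hS := mk_cbs H {y} {w, t} (Set.singleton_nonempty _) (Set.insert_nonempty _ _) hdj
      (by simp [ht, hyw]) (by simp) (by simp [hwt, htw])
    exact htB (hw _ hS (by simp) (by simp))
  have hL : ∀ x ∈ X, ∀ t, t ∉ B → H.Adj x t → ({x} ∪ insert t Y) ⊆ C := by
    intro x hx t htB hxt
    have hdj : Disjoint ({x} : Set V) (insert t Y) := by
      rw [Set.disjoint_singleton_left]
      rintro (h | h)
      · exact htB (h ▸ hXB x hx)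
      · exact hdis hx h
    have h1 : ∀ a ∈ ({x} : Set V), ∀ b ∈ insert t Y, H.Adj a b := by
      intro a ha b hb
      rw [Set.mem_singleton_iff] at ha
      rw [ha]
      rcases hb with hb | hb
      · rw [hb]; exact hxt
      · exact hXYadj x hx b hb
    have h3 : ∀ a ∈ insert t Y, ∀ b ∈ insert t Y, ¬ H.Adj a b := by
      intro a ha b hb
      rcases ha with ha | ha <;> rcases hb with hb | hb
      · rw [ha, hb]; exact H.irrefl
      · rw [ha]; exact fun h => htB (hNy b hb t h.symm)
      · rw [hb]; exact fun h => htB (hNy a ha t h)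
      · exact hYY a ha b hb
    have hS := mk_cbs H {x} (insert t Y) (Set.singleton_nonempty _) (Set.insert_nonempty _ _)
      hdj h1 (by simp) h3
    exact hout _ hS x (by simp) (hXB x hx) t (by simp) htB
  have hinX : ∀ b ∈ B, ∀ s, s ∉ B → H.Adj b s → b ∈ X := by
    intro b hb s hs h
    rw [hBXY] at hb
    rcases (Set.mem_union _ _ _).mp hb with hb | hb
    · exact hb
    · exact absurd (hNy b hb s h) hs
  obtain ⟨y₀, hy₀⟩ := hYne
  obtain ⟨p, hpC, hpD⟩ := hCD
  have hpB : p ∉ B := fun h => by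
    have hh : p ∈ B ∩ D := ⟨h, hpD⟩
    rw [hBD] at hh
    exact hh
  obtain ⟨x, hxX, hxp⟩ : ∃ x ∈ X, H.Adj x p := by
    obtain ⟨b₀, hb₀B, hb₀C⟩ := hBC
    by_cases hb₀p : H.Adj b₀ p
    · exact ⟨b₀, hinX b₀ hb₀B p hpB hb₀p, hb₀p⟩
    · obtain ⟨r, hrC, hpr⟩ := cbs_nbr H hC hpC
      have hb₀r : H.Adj b₀ r := by
        by_contra h
        exact cbs_tri H hC hpC hrC hb₀C hb₀p h hpr
      by_cases hrB : r ∈ B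
      · exact ⟨r, hinX r hrB p hpB hpr.symm, hpr.symm⟩
      · exfalso
        have hb₀X := hinX b₀ hb₀B r hrB hb₀r
        have hy₀C : y₀ ∈ C := hL b₀ hb₀X r hrB hb₀r (by simp [hy₀])
        exact cbs_tri H hC hpC hrC hy₀C (fun h => hpB (hNy y₀ hy₀ p h))
          (fun h => hrB (hNy y₀ hy₀ r h)) hpr
  obtain ⟨q, hqD, hpq⟩ := cbs_nbr H hD hpD
  have hqB : q ∉ B := fun h => by
    have hh : q ∈ B ∩ D := ⟨h, hqD⟩
    rw [hBD] at hh
    exact hh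
  have hy₀C : y₀ ∈ C := hL x hxX p hpB hxp (by simp [hy₀])
  have hqC : q ∈ C := by
    by_cases hxq : H.Adj x q
    · exact hL x hxX q hqB hxq (by simp)
    · have hqx : ¬ H.Adj q x := fun h => hxq h.symm
      have hpx : H.Adj p x := hxp.symm
      have hdj : Disjoint ({p} : Set V) {x, q} := by
        rw [Set.disjoint_singleton_left]
        rintro (h | h)
        · exact hpB (h ▸ hXB x hxX)
        · exact hpq.ne h
      have hS := mk_cbs H {p} {x, q} (Set.singleton_nonempty _) (Set.insert_nonempty _ _) hdj
        (by simp [hpx, hpq]) (by simp) (by simp [hxq, hqx])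
      exact hout _ hS x (by simp) (hXB x hxX) p (by simp) hpB (by simp)
  exact cbs_tri H hC hpC hqC hy₀C (fun h => hpB (hNy y₀ hy₀ p h))
    (fun h => hqB (hNy y₀ hy₀ q h)) hpq

lemma core2 [Finite V] (H : SimpleGraph V) {B C D : Set V}
    (hB : IsBiclique H B) (hC : IsBiclique H C) (hD : IsBiclique H D) (hCB : C ≠ B)
    (hBC : (B ∩ C).Nonempty) (hCD : (C ∩ D).Nonempty) (hBD : B ∩ D = ∅) :
    ∃ E, IsBiclique H E ∧ E ≠ B ∧ E ≠ C ∧ (B ∩ E).Nonempty := by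
  by_contra hcon
  have hall : ∀ S, IsCompleteBipartiteSet H S → (B ∩ S).Nonempty → S ⊆ B ∨ S ⊆ C := by
    intro S hS hm
    obtain ⟨E, hE, hSE⟩ := cbs_extend H hS
    by_cases h1 : E = B
    · exact Or.inl (h1 ▸ hSE)
    by_cases h2 : E = C
    · exact Or.inr (h2 ▸ hSE)
    obtain ⟨x, hxB, hxS⟩ := hm
    exact absurd ⟨E, hE, h1, h2, ⟨x, hxB, hSE hxS⟩⟩ hcon
  have hBC' : ¬ B ⊆ C := fun h => hCB (hB.2 C hC.1 h)
  obtain ⟨w, hwB, hwC⟩ := Set.not_subset.mp hBC'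
  obtain ⟨X, Y, hX, hY, hBXY, hXY, hadj⟩ := hB.1
  have hwB' : w ∈ X ∪ Y := hBXY ▸ hwB
  rcases (Set.mem_union _ _ _).mp hwB' with hwX | hwY
  · exact key_aux H hC.1 hD.1 hBXY hXY hY hadj hall hwX hwC hBC hCD hBD
  · exact key_aux H hC.1 hD.1 (hBXY.trans (Set.union_comm X Y)) hXY.symm hX
      (fun a ha b hb => (hadj a ha b hb).trans or_comm) hall hwY hwC hBC hCD hBD

/-- If `G = KB(H)` for some graph `H`, `G` is connected and has at least `3` vertices, then every
vertex of `G` has degree at least `2`. -/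
theorem min_degree_two
    {V W : Type*} [Fintype V] [Fintype W] (H : SimpleGraph W) (G : SimpleGraph V)
    [DecidableRel G.Adj] (iso : G ≃g KB H) (hG : G.Connected) (hcard : 3 ≤ Fintype.card V) :
    ∀ v : V, 2 ≤ G.degree v := by
  intro v
  classical
  -- get two other vertices
  have hcard2 : 1 < (Finset.univ.erase v).card := by
    rw [Finset.card_erase_of_mem (Finset.mem_univ v), Finset.card_univ]
    omega
  obtain ⟨a, ha, b, hb, hab⟩ := Finset.one_lt_card.mp hcard2
  have hav : a ≠ v := Finset.ne_of_mem_erase ha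
  have hbv : b ≠ v := Finset.ne_of_mem_erase hb
  suffices h : ∃ x y, x ≠ y ∧ G.Adj v x ∧ G.Adj v y by
    obtain ⟨x, y, hxy, hx, hy⟩ := h
    rw [← G.card_neighborFinset_eq_degree]
    exact Finset.one_lt_card.mpr ⟨x, by simpa using hx, y, by simpa using hy, hxy⟩
  obtain ⟨c, hc⟩ : ∃ c, G.Adj v c := by
    obtain ⟨p⟩ := hG.preconnected v a
    obtain ⟨d, -, hd1, hd2⟩ := p.exists_boundary_dart {v} (Set.mem_singleton v) (by simpa using hav)
    rw [Set.mem_singleton_iff] at hd1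
    exact ⟨d.snd, hd1 ▸ d.adj⟩
  obtain ⟨e, hev, hec⟩ : ∃ e, e ≠ v ∧ e ≠ c := by
    by_cases hac : a = c
    · exact ⟨b, hbv, fun h => hab (hac.trans h.symm)⟩
    · exact ⟨a, hav, hac⟩
  obtain ⟨p⟩ := hG.preconnected v e
  obtain ⟨d, -, hd1, hd2⟩ := p.exists_boundary_dart {v, c} (by simp) (by simp [hev, hec])
  simp only [Set.mem_insert_iff, Set.mem_singleton_iff, not_or] at hd1 hd2
  rcases hd1 with hd1 | hd1
  · exact ⟨c, d.snd, fun h => hd2.2 h.symm, hc, hd1 ▸ d.adj⟩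
  by_cases hvD : G.Adj v d.snd
  · exact ⟨c, d.snd, fun h => hd2.2 h.symm, hc, hvD⟩
  have hcD : G.Adj c d.snd := hd1 ▸ d.adj
  have hBC := (iso.map_adj_iff.mpr hc).2
  have hCD := (iso.map_adj_iff.mpr hcD).2
  have hBD : (iso v).1 ∩ (iso d.snd).1 = ∅ := by
    by_contra hne
    have hK : (KB H).Adj (iso v) (iso d.snd) :=
      ⟨fun h => hd2.1 (iso.injective h).symm, Set.nonempty_iff_ne_empty.mpr hne⟩
    exact hvD (iso.map_adj_iff.mp hK)
  have hCB : (iso c).1 ≠ (iso v).1 := fun h => hc.ne (iso.injective (Subtype.ext h)).symm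
  obtain ⟨E, hE, hEB, hEC, hm⟩ := core2 H (iso v).2 (iso c).2 (iso d.snd).2 hCB hBC hCD hBD
  refine ⟨c, iso.symm ⟨E, hE⟩, ?_, hc, ?_⟩
  · intro h
    apply hEC
    rw [h]
    simp
  · rw [← iso.map_adj_iff]
    simp only [RelIso.apply_symm_apply]
    exact ⟨fun h => hEB (congrArg Subtype.val h).symm, hm⟩
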